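/- arXiv:2001.10262 — 5 statements merged into one kernel-verified Lean document; each statement's English description precedes it below -/
import Mathlib

section
/- If X is a compact metric space and r: X → ℝ≥0 is an extremal function, then for each x ∈ X there exists y ∈ X with r(x) + r(y) = d(x,y). -/
/-- A nonnegative function `r` on a metric space is extremal if it satisfies
`d(x,y) ≤ r x + r y` and is pointwise minimal with this property. -/
def IsExtremal {X : Type*} [MetricSpace X] (r : X → ℝ) : Prop :=
  (∀ x, 0 ≤ r x) ∧ (∀ x y, dist x y ≤ r x + r y) ∧
    ∀ s : X → ℝ, (∀ x, 0 ≤ s x) → (∀ x y, dist x y ≤ s x + s y) →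
      (∀ x, s x ≤ r x) → s = r

/-- On a compact metric space, an extremal function realizes equality somewhere. -/
theorem extremal_exists_eq {X : Type*} [MetricSpace X] [CompactSpace X]
    (r : X → ℝ) (hr : IsExtremal r) (x : X) :
    ∃ y : X, r x + r y = dist x y := by
  classical
  obtain ⟨hpos, htri, hmin⟩ := hr
  -- r is 1-Lipschitz
  have hlip : ∀ a b : X, r a ≤ r b + dist a b := by
    by_contra h
    push_neg at h
    obtain ⟨a, b, hab⟩ := h
    set s : X → ℝ := fun z => if z = a then r b + dist a b else r z with hs
    have hsr : s = r := by
      apply hmin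
      · intro z
        by_cases hz : z = a <;> simp [hs, hz]
        · have := hpos b; have := dist_nonneg (x := a) (y := b); linarith
        · exact hpos z
      · intro u v
        by_cases hu : u = a <;> by_cases hv : v = a <;> simp [hs, hu, hv]
        · have := dist_nonneg (x := a) (y := b); have := hpos b; linarith
        · have h1 := dist_triangle a b v
          have h2 := htri b v
          linarith
        · have h1 := dist_triangle u b a
          have h2 := htri u b
          rw [dist_comm b a] at h1
          linarith
        · exact htri u v
      · intro z
        by_cases hz : z = a <;> simp [hs, hz]
        exact le_of_lt hab
    have : s a = r a := by rw [hsr]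
    simp [hs] at this
    linarith
  have hcont : Continuous r := by
    apply LipschitzWith.continuous (K := 1)
    apply LipschitzWith.of_dist_le_mul
    intro a b
    rw [Real.dist_eq, NNReal.coe_one, one_mul, abs_sub_le_iff]
    constructor
    · have := hlip a b; linarith
    · have := hlip b a; rw [dist_comm b a] at this; linarith
  have hne : Nonempty X := ⟨x⟩
  obtain ⟨y₀, -, hy₀⟩ := isCompact_univ.exists_isMinOn (Set.univ_nonempty)
    (Continuous.continuousOn (f := fun y => r x + r y - dist x y) (by fun_prop))
  have hy₀' : ∀ w, r x + r y₀ - dist x y₀ ≤ r x + r w - dist x w := fun w =>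
    hy₀ (Set.mem_univ w)
  set ε := r x + r y₀ - dist x y₀ with hε
  have hε0 : 0 ≤ ε := by have := htri x y₀; linarith
  rcases eq_or_lt_of_le hε0 with heq | hlt
  · exact ⟨y₀, by linarith⟩
  · exfalso
    have hrx : 0 < r x := by
      have := hy₀' x
      simp at this
      linarith
    set δ := min ε (r x) with hδ
    have hδ0 : 0 < δ := lt_min hlt hrx
    have hδε : δ ≤ ε := min_le_left _ _
    have hδr : δ ≤ r x := min_le_right _ _
    set s : X → ℝ := fun z => if z = x then r x - δ else r z with hs
    have hsr : s = r := by
      apply hmin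
      · intro z
        by_cases hz : z = x <;> simp [hs, hz]
        · linarith
        · exact hpos z
      · intro u v
        by_cases hu : u = x <;> by_cases hv : v = x <;> simp [hs, hu, hv]
        · linarith
        · have := hy₀' v; linarith
        · have := hy₀' u; rw [dist_comm] ; linarith
        · exact htri u v
      · intro z
        by_cases hz : z = x <;> simp [hs, hz]
        linarith
    have : s x = r x := by rw [hsr]
    simp [hs] at this
    linarith
end

section
/- For every function r': X → ℝ≥0 with r'(x) + r'(y) ≥ d(x,y) for all x,y ∈ X, there exists an extremal function r with r(x) ≤ r'(x) for all x. -/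
/-- Below every admissible function there is an extremal function. -/
theorem exists_extremal_le {X : Type*} [MetricSpace X] (r' : X → ℝ)
    (h0 : ∀ x, 0 ≤ r' x) (h : ∀ x y, dist x y ≤ r' x + r' y) :
    ∃ r : X → ℝ, IsExtremal r ∧ ∀ x, r x ≤ r' x := by
  -- Work in the order dual so that Zorn gives a minimal element.
  set S : Set (X → ℝ) :=
    {s | (∀ x, 0 ≤ s x) ∧ (∀ x y, dist x y ≤ s x + s y) ∧ ∀ x, s x ≤ r' x} with hS
  have key : ∃ m, (fun f g : X → ℝ => g ≤ f) r' m ∧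
      m ∈ S ∧ ∀ z ∈ S, z ≤ m → m ≤ z := by
    have := zorn_le_nonempty₀ (α := (X → ℝ)ᵒᵈ)
      (OrderDual.ofDual ⁻¹' S) ?_ (OrderDual.toDual r') ⟨h0, h, fun _ => le_rfl⟩
    · obtain ⟨m, hrm, hmS, hmax⟩ := this
      exact ⟨OrderDual.ofDual m, hrm, hmS, fun z hz hzm => hmax hz hzm⟩
    · intro c hcS hc y hyc
      -- c is a chain in the dual order; take the pointwise infimum.
      set c' : Set (X → ℝ) := OrderDual.ofDual '' c with hc'
      have hne : c'.Nonempty := ⟨OrderDual.ofDual y, y, hyc, rfl⟩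
      have hc'S : c' ⊆ S := by rintro _ ⟨s, hs, rfl⟩; exact hcS hs
      have hchain : ∀ s ∈ c', ∀ t ∈ c', s ≤ t ∨ t ≤ s := by
        rintro _ ⟨s, hs, rfl⟩ _ ⟨t, ht, rfl⟩
        rcases eq_or_ne s t with rfl | hst
        · exact Or.inl le_rfl
        · rcases hc hs ht hst with h1 | h1
          · exact Or.inr h1
          · exact Or.inl h1
      have hbdd : ∀ x : X, BddBelow ((fun s : X → ℝ => s x) '' c') := by
        intro x
        refine ⟨0, ?_⟩
        rintro _ ⟨s, hs, rfl⟩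
        exact (hc'S hs).1 x
      set f : X → ℝ := fun x => sInf ((fun s : X → ℝ => s x) '' c') with hf
      have hfle : ∀ s ∈ c', ∀ x, f x ≤ s x := fun s hs x =>
        csInf_le (hbdd x) ⟨s, hs, rfl⟩
      have hf0 : ∀ x, 0 ≤ f x := by
        intro x
        apply le_csInf (hne.image _)
        rintro _ ⟨s, hs, rfl⟩
        exact (hc'S hs).1 x
      have hfr' : ∀ x, f x ≤ r' x := by
        intro x
        obtain ⟨s, hs⟩ := hne
        exact (hfle s hs x).trans ((hc'S hs).2.2 x)
      have hfd : ∀ x z, dist x z ≤ f x + f z := by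
        intro x z
        refine le_of_forall_pos_le_add fun ε hε => ?_
        have hx : f x < f x + ε / 2 := by linarith
        have hz : f z < f z + ε / 2 := by linarith
        obtain ⟨_, ⟨s, hs, rfl⟩, hsx⟩ := exists_lt_of_csInf_lt (hne.image _) hx
        obtain ⟨_, ⟨t, ht, rfl⟩, htz⟩ := exists_lt_of_csInf_lt (hne.image _) hz
        rcases hchain s hs t ht with h1 | h1
        · have := (hc'S hs).2.1 x z
          have h2 : s z ≤ t z := h1 z
          linarith
        · have := (hc'S ht).2.1 x z
          have h2 : t x ≤ s x := h1 x
          linarith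
      refine ⟨OrderDual.toDual f, ⟨hf0, hfd, hfr'⟩, ?_⟩
      intro z hz
      intro x
      exact hfle (OrderDual.ofDual z) ⟨z, hz, rfl⟩ x
  obtain ⟨m, hrm, ⟨hm0, hmd, hmr'⟩, hmin⟩ := key
  refine ⟨m, ⟨hm0, hmd, fun s hs0 hsd hsm => ?_⟩, hmr'⟩
  have hsS : s ∈ S := ⟨hs0, hsd, fun x => (hsm x).trans (hmr' x)⟩
  have := hmin s hsS (fun x => hsm x)
  exact le_antisymm (fun x => hsm x) this
end

section
/- For three equidistant points x₁, x₂, x₃ in the Euclidean plane with pairwise distance a > 0 and ½ ≤ ρ < 1/√3, the balls B(xᵢ, aρ) intersect pairwise, but the triple intersection B(x₁,aρ) ∩ B(x₂,aρ) ∩ B(x₃,aρ) is empty. -/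
private lemma key_identity {E : Type*} [NormedAddCommGroup E] [InnerProductSpace ℝ E]
    (u v w : E) :
    ‖u - v‖ ^ 2 + ‖v - w‖ ^ 2 + ‖w - u‖ ^ 2 + ‖u + v + w‖ ^ 2
      = 3 * (‖u‖ ^ 2 + ‖v‖ ^ 2 + ‖w‖ ^ 2) := by
  simp only [← real_inner_self_eq_norm_sq, inner_sub_left, inner_sub_right,
    inner_add_left, inner_add_right, real_inner_comm u v, real_inner_comm u w,
    real_inner_comm v w]
  ring

/-- For three equidistant points in the Euclidean plane with pairwise distance
`a > 0` and `1/2 ≤ ρ < 1/√3`, the balls `B(xᵢ, aρ)` intersect pairwise but the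
triple intersection is empty. -/
theorem equilateral_unfilled_simplex
    (x₁ x₂ x₃ : EuclideanSpace ℝ (Fin 2)) (a ρ : ℝ) (ha : 0 < a)
    (h₁₂ : dist x₁ x₂ = a) (h₂₃ : dist x₂ x₃ = a) (h₃₁ : dist x₃ x₁ = a)
    (hρ₁ : 1 / 2 ≤ ρ) (hρ₂ : ρ < 1 / Real.sqrt 3) :
    ((Metric.closedBall x₁ (a * ρ) ∩ Metric.closedBall x₂ (a * ρ)).Nonempty ∧
     (Metric.closedBall x₂ (a * ρ) ∩ Metric.closedBall x₃ (a * ρ)).Nonempty ∧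
     (Metric.closedBall x₃ (a * ρ) ∩ Metric.closedBall x₁ (a * ρ)).Nonempty) ∧
    Metric.closedBall x₁ (a * ρ) ∩ Metric.closedBall x₂ (a * ρ) ∩
      Metric.closedBall x₃ (a * ρ) = ∅ := by
  have hhalf : a / 2 ≤ a * ρ := by
    have := mul_le_mul_of_nonneg_left hρ₁ ha.le
    linarith
  have mid : ∀ p q : EuclideanSpace ℝ (Fin 2), dist p q = a →
      (Metric.closedBall p (a * ρ) ∩ Metric.closedBall q (a * ρ)).Nonempty := by
    intro p q hpq
    refine ⟨midpoint ℝ p q, ?_, ?_⟩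
    · simp [Metric.mem_closedBall, dist_comm, dist_left_midpoint, hpq]
      linarith
    · simp [Metric.mem_closedBall, dist_comm, dist_midpoint_right, hpq]
      linarith
  refine ⟨⟨mid _ _ h₁₂, mid _ _ h₂₃, mid _ _ h₃₁⟩, ?_⟩
  rw [Set.eq_empty_iff_forall_notMem]
  rintro y ⟨⟨hy₁, hy₂⟩, hy₃⟩
  rw [Metric.mem_closedBall] at hy₁ hy₂ hy₃
  have haρ : 0 ≤ a * ρ := le_trans (by positivity) hhalf
  -- aρ < a / √3
  have h3 : (0:ℝ) < Real.sqrt 3 := Real.sqrt_pos.mpr (by norm_num)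
  have haρ2 : (a * ρ) ^ 2 < a ^ 2 / 3 := by
    have h1 : a * ρ < a * (1 / Real.sqrt 3) := by
      exact mul_lt_mul_of_pos_left hρ₂ ha
    have h2 : (a * ρ) ^ 2 < (a * (1 / Real.sqrt 3)) ^ 2 :=
      pow_lt_pow_left₀ h1 haρ (by norm_num)
    have : (a * (1 / Real.sqrt 3)) ^ 2 = a ^ 2 / 3 := by
      rw [mul_pow]
      rw [div_pow, one_pow, Real.sq_sqrt (by norm_num : (3:ℝ) ≥ 0)]
      ring
    linarith
  have key := key_identity (y - x₁) (y - x₂) (y - x₃)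
  have e₁ : y - x₁ - (y - x₂) = x₂ - x₁ := by abel
  have e₂ : y - x₂ - (y - x₃) = x₃ - x₂ := by abel
  have e₃ : y - x₃ - (y - x₁) = x₁ - x₃ := by abel
  rw [e₁, e₂, e₃] at key
  have n₁ : ‖x₂ - x₁‖ = a := by rw [← dist_eq_norm, dist_comm]; exact h₁₂
  have n₂ : ‖x₃ - x₂‖ = a := by rw [← dist_eq_norm, dist_comm]; exact h₂₃
  have n₃ : ‖x₁ - x₃‖ = a := by rw [← dist_eq_norm, dist_comm]; exact h₃₁
  rw [n₁, n₂, n₃] at key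
  have b₁ : ‖y - x₁‖ ^ 2 ≤ (a * ρ) ^ 2 := by
    have : ‖y - x₁‖ ≤ a * ρ := by rw [← dist_eq_norm]; exact hy₁
    exact pow_le_pow_left₀ (norm_nonneg _) this 2
  have b₂ : ‖y - x₂‖ ^ 2 ≤ (a * ρ) ^ 2 := by
    have : ‖y - x₂‖ ≤ a * ρ := by rw [← dist_eq_norm]; exact hy₂
    exact pow_le_pow_left₀ (norm_nonneg _) this 2
  have b₃ : ‖y - x₃‖ ^ 2 ≤ (a * ρ) ^ 2 := by
    have : ‖y - x₃‖ ≤ a * ρ := by rw [← dist_eq_norm]; exact hy₃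
    exact pow_le_pow_left₀ (norm_nonneg _) this 2
  have hsq : (0:ℝ) ≤ ‖y - x₁ + (y - x₂) + (y - x₃)‖ ^ 2 := by positivity
  nlinarith [key, b₁, b₂, b₃, hsq, haρ2]
end

section
/- For any three non-collinear points x₁, x₂, x₃ in the Euclidean plane with Gromov products r₁, r₂, r₃, the quantity ρ(x₁,x₂,x₃) = inf_{x ∈ ℝ²} max_i d(xᵢ,x)/rᵢ satisfies 1 < ρ(x₁,x₂,x₃) ≤ 2/√3. -/
open scoped RealInnerProductSpace

private lemma rho_norm_combo_sq {E : Type*} [NormedAddCommGroup E] [InnerProductSpace ℝ E]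
    (α β : ℝ) (u v : E) :
    ‖α • u + β • v‖ ^ 2 = α ^ 2 * ‖u‖ ^ 2 + 2 * α * β * ⟪u, v⟫ + β ^ 2 * ‖v‖ ^ 2 := by
  rw [norm_add_sq_real, real_inner_smul_left, real_inner_smul_right, norm_smul, norm_smul,
    mul_pow, mul_pow, Real.norm_eq_abs, Real.norm_eq_abs, sq_abs, sq_abs]
  ring

set_option maxHeartbeats 1000000 in
private lemma rho_collinear_of_wbtw {E : Type*} [NormedAddCommGroup E] [InnerProductSpace ℝ E]
    (x₁ x₂ x₃ x : E) (h12 : Wbtw ℝ x₁ x x₂) (h13 : Wbtw ℝ x₁ x x₃)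
    (h23 : Wbtw ℝ x₂ x x₃) : Collinear ℝ ({x₁, x₂, x₃} : Set E) := by
  rcases eq_or_ne x x₁ with rfl | hne
  · have := h23.collinear
    rwa [Set.insert_comm] at this
  · have c12 := h12.collinear
    have c13 := h13.collinear
    have hx1 : x₁ ∈ line[ℝ, x₁, x] := left_mem_affineSpan_pair ℝ x₁ x
    have hx2 : x₂ ∈ line[ℝ, x₁, x] :=
      c12.mem_affineSpan_of_mem_of_ne (by simp) (by simp) (by simp) hne.symm
    have hx3 : x₃ ∈ line[ℝ, x₁, x] :=
      c13.mem_affineSpan_of_mem_of_ne (by simp) (by simp) (by simp) hne.symm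
    exact collinear_triple_of_mem_affineSpan_pair hx1 hx2 hx3

set_option maxHeartbeats 2000000 in
/-- For three non-collinear points in the Euclidean plane with Gromov products
`r₁, r₂, r₃`, the quantity `ρ = inf_x max_i d(xᵢ,x)/rᵢ` satisfies
`1 < ρ ≤ 2/√3`. -/
theorem rho_bounds_plane (x₁ x₂ x₃ : EuclideanSpace ℝ (Fin 2))
    (hnc : ¬ Collinear ℝ ({x₁, x₂, x₃} : Set (EuclideanSpace ℝ (Fin 2))))
    (r₁ r₂ r₃ : ℝ)
    (h₁ : r₁ = (dist x₁ x₂ + dist x₁ x₃ - dist x₂ x₃) / 2)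
    (h₂ : r₂ = (dist x₁ x₂ + dist x₂ x₃ - dist x₁ x₃) / 2)
    (h₃ : r₃ = (dist x₁ x₃ + dist x₂ x₃ - dist x₁ x₂) / 2) :
    1 < ⨅ x : EuclideanSpace ℝ (Fin 2),
        max (dist x₁ x / r₁) (max (dist x₂ x / r₂) (dist x₃ x / r₃)) ∧
      (⨅ x : EuclideanSpace ℝ (Fin 2),
        max (dist x₁ x / r₁) (max (dist x₂ x / r₂) (dist x₃ x / r₃)))
        ≤ 2 / Real.sqrt 3 := by

  -- positivity of the Gromov products
  have hr1 : 0 < r₁ := by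
    by_contra hcon
    push_neg at hcon
    have htri : dist x₂ x₃ ≤ dist x₂ x₁ + dist x₁ x₃ := dist_triangle _ _ _
    rw [dist_comm x₂ x₁] at htri
    have heq : dist x₂ x₁ + dist x₁ x₃ = dist x₂ x₃ := by
      rw [dist_comm x₂ x₁]
      rw [h₁] at hcon
      linarith
    have hw := dist_add_dist_eq_iff.mp heq
    exact hnc (Set.insert_comm x₂ x₁ {x₃} ▸ hw.collinear)
  have hr2 : 0 < r₂ := by
    by_contra hcon
    push_neg at hcon
    have htri : dist x₁ x₃ ≤ dist x₁ x₂ + dist x₂ x₃ := dist_triangle _ _ _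
    have heq : dist x₁ x₂ + dist x₂ x₃ = dist x₁ x₃ := by
      rw [h₂] at hcon
      linarith
    exact hnc (dist_add_dist_eq_iff.mp heq).collinear
  have hr3 : 0 < r₃ := by
    by_contra hcon
    push_neg at hcon
    have htri : dist x₁ x₂ ≤ dist x₁ x₃ + dist x₃ x₂ := dist_triangle _ _ _
    rw [dist_comm x₃ x₂] at htri
    have heq : dist x₁ x₃ + dist x₃ x₂ = dist x₁ x₂ := by
      rw [dist_comm x₃ x₂]
      rw [h₃] at hcon
      linarith
    have hw := dist_add_dist_eq_iff.mp heq
    exact hnc (by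
      have : ({x₁, x₃, x₂} : Set (EuclideanSpace ℝ (Fin 2))) = {x₁, x₂, x₃} := by rw [Set.pair_comm x₃ x₂]
      exact this ▸ hw.collinear)
  have hd12 : dist x₁ x₂ = r₁ + r₂ := by rw [h₁, h₂]; ring
  have hd13 : dist x₁ x₃ = r₁ + r₃ := by rw [h₁, h₃]; ring
  have hd23 : dist x₂ x₃ = r₂ + r₃ := by rw [h₂, h₃]; ring
  set f : EuclideanSpace ℝ (Fin 2) → ℝ := fun x => max (dist x₁ x / r₁) (max (dist x₂ x / r₂) (dist x₃ x / r₃))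
    with hf_def
  have hf0 : ∀ x, 0 ≤ f x := fun x =>
    le_trans (div_nonneg dist_nonneg hr1.le) (le_max_left _ _)
  have hbdd : BddBelow (Set.range f) := ⟨0, by rintro y ⟨x, rfl⟩; exact hf0 x⟩
  have hfc : Continuous f := by
    apply Continuous.max
    · exact (continuous_const.dist continuous_id).div_const r₁
    · exact Continuous.max ((continuous_const.dist continuous_id).div_const r₂)
        ((continuous_const.dist continuous_id).div_const r₃)
  constructor
  · -- lower bound
    set R := r₁ * (f x₁ + 1) with hR_def
    have hR0 : 0 ≤ R := by positivity
    have hx₁K : x₁ ∈ Metric.closedBall x₁ R := by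
      simp [Metric.mem_closedBall, hR0]
    obtain ⟨x₀, hx₀K, hx₀min⟩ :=
      (isCompact_closedBall x₁ R).exists_isMinOn ⟨x₁, hx₁K⟩ hfc.continuousOn
    have hmin : ∀ x, f x₀ ≤ f x := by
      intro x
      by_cases hx : x ∈ Metric.closedBall x₁ R
      · exact isMinOn_iff.mp hx₀min x hx
      · have hRx : R < dist x₁ x := by
          rw [Metric.mem_closedBall, not_le, dist_comm] at hx
          exact hx
        have h1 : f x₁ + 1 < dist x₁ x / r₁ := by
          rw [lt_div_iff₀ hr1]
          nlinarith
        refine le_of_lt ?_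
        calc f x₀ ≤ f x₁ := isMinOn_iff.mp hx₀min x₁ hx₁K
          _ < dist x₁ x / r₁ := by linarith
          _ ≤ f x := le_max_left _ _
    have hgt : 1 < f x₀ := by
      by_contra hcon
      push_neg at hcon
      have hb1 : dist x₁ x₀ ≤ r₁ :=
        (div_le_one hr1).mp (le_trans (le_max_left _ _) hcon)
      have hb2 : dist x₂ x₀ ≤ r₂ :=
        (div_le_one hr2).mp (le_trans (le_trans (le_max_left _ _) (le_max_right _ _)) hcon)
      have hb3 : dist x₃ x₀ ≤ r₃ :=
        (div_le_one hr3).mp (le_trans (le_trans (le_max_right _ _) (le_max_right _ _)) hcon)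
      have h12 : Wbtw ℝ x₁ x₀ x₂ := by
        apply dist_add_dist_eq_iff.mp
        have := dist_triangle x₁ x₀ x₂
        rw [dist_comm x₀ x₂]
        rw [dist_comm x₀ x₂] at this
        linarith [hd12 ▸ this, hd12]
      have h13 : Wbtw ℝ x₁ x₀ x₃ := by
        apply dist_add_dist_eq_iff.mp
        have := dist_triangle x₁ x₀ x₃
        rw [dist_comm x₀ x₃]
        rw [dist_comm x₀ x₃] at this
        linarith [hd13 ▸ this, hd13]
      have h23 : Wbtw ℝ x₂ x₀ x₃ := by
        apply dist_add_dist_eq_iff.mp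
        have := dist_triangle x₂ x₀ x₃
        rw [dist_comm x₀ x₃]
        rw [dist_comm x₀ x₃] at this
        linarith [hd23 ▸ this, hd23]
      exact hnc (rho_collinear_of_wbtw x₁ x₂ x₃ x₀ h12 h13 h23)
    exact lt_of_lt_of_le hgt (le_ciInf hmin)
  · -- upper bound: explicit point with barycentric weights (r₂r₃ : r₁r₃ : r₁r₂)
    set S : ℝ := r₂ * r₃ + r₁ * r₃ + r₁ * r₂ with hS_def
    have hS : 0 < S := by positivity
    have hSne : S ≠ 0 := hS.ne'
    set u := x₁ - x₃ with hu_def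
    set v := x₂ - x₃ with hv_def
    have hu : ‖u‖ = r₁ + r₃ := by rw [hu_def, ← dist_eq_norm]; exact hd13
    have hv : ‖v‖ = r₂ + r₃ := by rw [hv_def, ← dist_eq_norm]; exact hd23
    have huvn : ‖u - v‖ = r₁ + r₂ := by
      rw [hu_def, hv_def, sub_sub_sub_cancel_right, ← dist_eq_norm]; exact hd12
    have huv : ⟪u, v⟫ = ((r₁ + r₃) ^ 2 + (r₂ + r₃) ^ 2 - (r₁ + r₂) ^ 2) / 2 := by
      have h := norm_sub_sq_real u v
      rw [hu, hv, huvn] at h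
      linarith
    set p := x₃ + S⁻¹ • ((r₂ * r₃) • u + (r₁ * r₃) • v) with hp_def
    have hx1p : x₁ - p = (1 - S⁻¹ * (r₂ * r₃)) • u + (-(S⁻¹ * (r₁ * r₃))) • v := by
      rw [hp_def, hu_def, hv_def]; module
    have hx2p : x₂ - p = (-(S⁻¹ * (r₂ * r₃))) • u + (1 - S⁻¹ * (r₁ * r₃)) • v := by
      rw [hp_def, hu_def, hv_def]; module
    have hx3p : x₃ - p = (-(S⁻¹ * (r₂ * r₃))) • u + (-(S⁻¹ * (r₁ * r₃))) • v := by
      rw [hp_def, hu_def, hv_def]; module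
    have e1 : ‖x₁ - p‖ ^ 2
        = 4 / 3 * r₁ ^ 2 - (r₁ * (r₁ * (r₂ + r₃) - 2 * r₂ * r₃) / S) ^ 2 / 3 := by
      rw [hx1p, rho_norm_combo_sq, hu, hv, huv]
      field_simp
      ring
    have e2 : ‖x₂ - p‖ ^ 2
        = 4 / 3 * r₂ ^ 2 - (r₂ * (r₂ * (r₁ + r₃) - 2 * r₁ * r₃) / S) ^ 2 / 3 := by
      rw [hx2p, rho_norm_combo_sq, hu, hv, huv]
      field_simp
      ring
    have e3 : ‖x₃ - p‖ ^ 2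
        = 4 / 3 * r₃ ^ 2 - (r₃ * (r₃ * (r₁ + r₂) - 2 * r₁ * r₂) / S) ^ 2 / 3 := by
      rw [hx3p, rho_norm_combo_sq, hu, hv, huv]
      field_simp
      ring
    have hsq3 : Real.sqrt 3 ^ 2 = 3 := Real.sq_sqrt (by norm_num)
    have hs3 : (0:ℝ) < Real.sqrt 3 := Real.sqrt_pos.mpr (by norm_num)
    have key : ∀ (y : EuclideanSpace ℝ (Fin 2)) (r : ℝ), 0 < r → ‖y - p‖ ^ 2 ≤ 4 / 3 * r ^ 2 →
        dist y p / r ≤ 2 / Real.sqrt 3 := by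
      intro y r hr hle
      rw [div_le_div_iff₀ hr hs3]
      have hc : (2 * r) ^ 2 = 3 * (4 / 3 * r ^ 2) := by ring
      have h2 : (dist y p * Real.sqrt 3) ^ 2 ≤ (2 * r) ^ 2 := by
        rw [mul_pow, hsq3, hc, dist_eq_norm]
        nlinarith [hle]
      exact (pow_le_pow_iff_left₀ (by positivity) (by positivity) two_ne_zero).mp h2
    have hfp : f p ≤ 2 / Real.sqrt 3 := by
      rw [hf_def]
      refine max_le ?_ (max_le ?_ ?_)
      · exact key x₁ r₁ hr1 (by rw [e1]; nlinarith [sq_nonneg (r₁ * (r₁ * (r₂ + r₃) - 2 * r₂ * r₃) / S)])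
      · exact key x₂ r₂ hr2 (by rw [e2]; nlinarith [sq_nonneg (r₂ * (r₂ * (r₁ + r₃) - 2 * r₁ * r₃) / S)])
      · exact key x₃ r₃ hr3 (by rw [e3]; nlinarith [sq_nonneg (r₃ * (r₃ * (r₁ + r₂) - 2 * r₁ * r₂) / S)])
    exact le_trans (ciInf_le hbdd p) hfp
end

section
/- For the equidistant points x₁ = 0, x₂ = 1/3, x₃ = 2/3 on the circle ℝ/ℤ, the Gromov products are r₁ = r₂ = r₃ = 1/6, and ρ(x₁,x₂,x₃) = inf_{x} max_i d(xᵢ,x)/rᵢ equals 2. -/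
lemma circle_rho_key (t : ℝ) : (1:ℝ)/3 ≤ max ‖((t:ℝ) : AddCircle (1:ℝ))‖
    (max ‖((t - 1/3 : ℝ) : AddCircle (1:ℝ))‖ ‖((t - 2/3 : ℝ) : AddCircle (1:ℝ))‖) := by
  by_contra h
  push_neg at h
  have h1 : ‖((t:ℝ) : AddCircle (1:ℝ))‖ < 1/3 := lt_of_le_of_lt (le_max_left _ _) h
  have h2 : ‖((t - 1/3 : ℝ) : AddCircle (1:ℝ))‖ < 1/3 :=
    lt_of_le_of_lt ((le_max_left _ _).trans (le_max_right _ _)) h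
  have h3 : ‖((t - 2/3 : ℝ) : AddCircle (1:ℝ))‖ < 1/3 :=
    lt_of_le_of_lt ((le_max_right _ _).trans (le_max_right _ _)) h
  rw [AddCircle.norm_eq] at h1 h2 h3
  simp only [inv_one, one_mul, mul_one] at h1 h2 h3
  set a := round t
  set b := round (t - 1/3)
  set c := round (t - 2/3)
  rw [abs_lt] at h1 h2 h3
  have hba : b = a := by
    have l : (-1:ℤ) < b - a := by
      exact_mod_cast show ((-1:ℝ)) < ((b - a : ℤ) : ℝ) by push_cast; linarith [h1.2, h2.1]
    have r : (b : ℤ) - a < 1 := by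
      exact_mod_cast show (((b - a : ℤ)) : ℝ) < 1 by push_cast; linarith [h1.1, h2.2]
    omega
  have hca : c = a - 1 := by
    have l : (-2:ℤ) < c - a := by
      exact_mod_cast show ((-2:ℝ)) < ((c - a : ℤ) : ℝ) by push_cast; linarith [h1.2, h3.1]
    have r : (c : ℤ) - a < 0 := by
      exact_mod_cast show (((c - a : ℤ)) : ℝ) < 0 by push_cast; linarith [h1.1, h3.2]
    omega
  rw [hba] at h2
  rw [hca] at h3
  push_cast at h3
  linarith [h2.1, h3.2]

/-- For the equidistant points `0, 1/3, 2/3` on the circle `ℝ/ℤ`, the Gromov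
products are all `1/6`, and `ρ = inf_x max_i d(xᵢ,x)/rᵢ` equals `2`. -/
theorem circle_rho_eq_two :
    let x₁ : AddCircle (1 : ℝ) := ((0 : ℝ) : AddCircle (1 : ℝ))
    let x₂ : AddCircle (1 : ℝ) := ((1 / 3 : ℝ) : AddCircle (1 : ℝ))
    let x₃ : AddCircle (1 : ℝ) := ((2 / 3 : ℝ) : AddCircle (1 : ℝ))
    (dist x₁ x₂ + dist x₁ x₃ - dist x₂ x₃) / 2 = 1 / 6 ∧
    (dist x₁ x₂ + dist x₂ x₃ - dist x₁ x₃) / 2 = 1 / 6 ∧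
    (dist x₁ x₃ + dist x₂ x₃ - dist x₁ x₂) / 2 = 1 / 6 ∧
    (⨅ x : AddCircle (1 : ℝ),
        max (dist x₁ x / (1 / 6)) (max (dist x₂ x / (1 / 6)) (dist x₃ x / (1 / 6))))
      = 2 := by
  intro x₁ x₂ x₃
  have d12 : dist x₁ x₂ = 1/3 := by
    show dist (((0:ℝ)) : AddCircle (1:ℝ)) (((1/3:ℝ)) : AddCircle (1:ℝ)) = 1/3
    rw [dist_eq_norm, ← AddCircle.coe_sub, AddCircle.norm_eq]; norm_num [round_eq]
  have d13 : dist x₁ x₃ = 1/3 := by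
    show dist (((0:ℝ)) : AddCircle (1:ℝ)) (((2/3:ℝ)) : AddCircle (1:ℝ)) = 1/3
    rw [dist_eq_norm, ← AddCircle.coe_sub, AddCircle.norm_eq]; norm_num [round_eq]
  have d23 : dist x₂ x₃ = 1/3 := by
    show dist (((1/3:ℝ)) : AddCircle (1:ℝ)) (((2/3:ℝ)) : AddCircle (1:ℝ)) = 1/3
    rw [dist_eq_norm, ← AddCircle.coe_sub, AddCircle.norm_eq]; norm_num [round_eq]
  refine ⟨by rw [d12, d13, d23]; norm_num, by rw [d12, d13, d23]; norm_num,
    by rw [d12, d13, d23]; norm_num, ?_⟩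
  apply le_antisymm
  · have hb : BddBelow (Set.range fun x : AddCircle (1:ℝ) =>
        max (dist x₁ x / (1 / 6)) (max (dist x₂ x / (1 / 6)) (dist x₃ x / (1 / 6)))) := by
      refine ⟨0, ?_⟩
      rintro y ⟨x, rfl⟩
      have := dist_nonneg (x := x₁) (y := x)
      positivity
    refine le_trans (ciInf_le hb x₁) ?_
    have d1 : dist x₁ x₁ = 0 := dist_self _
    have d2 : dist x₂ x₁ = 1/3 := by rw [dist_comm]; exact d12
    have d3 : dist x₃ x₁ = 1/3 := by rw [dist_comm]; exact d13
    rw [d1, d2, d3]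
    norm_num
  · refine le_ciInf fun x => ?_
    induction x using QuotientAddGroup.induction_on with
    | H t =>
    have e1 : dist x₁ ((t:ℝ) : AddCircle (1:ℝ)) = ‖((t : ℝ) : AddCircle (1:ℝ))‖ := by
      show dist (((0:ℝ)) : AddCircle (1:ℝ)) _ = _
      rw [dist_eq_norm, ← AddCircle.coe_sub, zero_sub, AddCircle.coe_neg, norm_neg]
    have e2 : dist x₂ ((t:ℝ) : AddCircle (1:ℝ)) = ‖((t - 1/3 : ℝ) : AddCircle (1:ℝ))‖ := by
      show dist (((1/3:ℝ)) : AddCircle (1:ℝ)) _ = _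
      rw [dist_eq_norm, ← AddCircle.coe_sub, show (1/3 - t : ℝ) = -(t - 1/3) by ring,
        AddCircle.coe_neg, norm_neg]
    have e3 : dist x₃ ((t:ℝ) : AddCircle (1:ℝ)) = ‖((t - 2/3 : ℝ) : AddCircle (1:ℝ))‖ := by
      show dist (((2/3:ℝ)) : AddCircle (1:ℝ)) _ = _
      rw [dist_eq_norm, ← AddCircle.coe_sub, show (2/3 - t : ℝ) = -(t - 2/3) by ring,
        AddCircle.coe_neg, norm_neg]
    rw [e1, e2, e3]
    have hk := circle_rho_key t
    rcases le_max_iff.mp hk with h | h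
    · exact le_trans (by linarith) ((le_max_left _ _))
    rcases le_max_iff.mp h with h | h
    · exact le_trans (by linarith) ((le_max_left _ _).trans (le_max_right _ _))
    · exact le_trans (by linarith) ((le_max_right _ _).trans (le_max_right _ _))
end
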